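/- The corona product G ∘ H of two nontrivial graphs G, H is quasi-λ-distance-balanced if and only if G and H are both empty graphs; in that case λ = |V(H)|. -/

import Mathlib

/-!
The pendant edge from `a` to a vertex `(a, b)` of the copy `H_a` has `W = {(a, b)}` on the
pendant side, so `λ = |W_{a,(a,b)}| = |C| - |N_H[b]|`, where `C` is the component of `a`.
Since every path out of `H_a` passes through `a`, this count sees all of `C` outside `H_a`.
An edge `a₁a₂` of `G` has both `W`-sets containing a whole star `{a_i} ∪ H_{a_i}`, hence
`(λ + 1)(|β| + 1) ≤ |C|`, which is incompatible with `λ ≥ |C| - |β|`.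
An edge `b₁b₂` of `H` forces `|N[b₁]| = |N[b₂]|`, and then its two `W`-sets, which are
`{b_i} ∪ (N[b_i] \ N[b_j])` inside `H_a`, have equal size, contradicting `λ > 1`.
For `G = H = ⊥` the components are stars `K_{1,|β|}`, giving `λ = |β|`.
-/

open SimpleGraph

/-- `wSet G u v` is the set of vertices strictly closer to `u` than to `v`. -/
def wSet {V : Type*} (G : SimpleGraph V) (u v : V) : Set V :=
  {x | G.dist x u < G.dist x v}

/-- `G` is quasi-`lam`-distance-balanced. -/
def QuasiDB {V : Type*} (G : SimpleGraph V) (lam : ℚ) : Prop :=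
  ∀ u v : V, G.Adj u v →
    ((wSet G u v).ncard : ℚ) = lam * ((wSet G v u).ncard : ℚ) ∨
    ((wSet G v u).ncard : ℚ) = lam * ((wSet G u v).ncard : ℚ)


/-- The corona product `G ∘ H`: one copy of `G` together with a copy `H_i` of
`H` for each vertex `i` of `G`, joining the vertex `i` of `G` to every vertex
of `H_i`. -/
def corona {α β : Type*} (G : SimpleGraph α) (H : SimpleGraph β) :
    SimpleGraph (α ⊕ α × β) where
  Adj x y :=
    match x, y with
    | .inl u, .inl v => G.Adj u v
    | .inl u, .inr p => u = p.1
    | .inr p, .inl u => u = p.1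
    | .inr p, .inr q => p.1 = q.1 ∧ H.Adj p.2 q.2
  symm := by
    constructor
    intro x y h
    cases x <;> cases y <;> simp_all [SimpleGraph.adj_comm, eq_comm]
  loopless := by
    constructor
    intro x
    cases x <;> simp

open Set

namespace SimpleGraph

variable {V : Type*} {G : SimpleGraph V} {S : Set V} {s u x : V}

theorem Walk.dist_add_one_le_length_of_separates
    (hS : ∀ s ∈ S, ∀ y, G.Adj s y → y ∈ S ∨ y = u) (hx : x ∉ S) (w : G.Walk s x) (hs : s ∈ S) :
    G.dist u x + 1 ≤ w.length := by
  induction w with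
  | nil => exact absurd hs hx
  | cons h p ih =>
    rw [Walk.length_cons]
    rcases hS _ hs _ h with hy | rfl
    · exact (ih hx hy).trans (Nat.le_succ _)
    · exact Nat.succ_le_succ (dist_le p)

theorem dist_eq_dist_add_one_of_separates (hS : ∀ s ∈ S, ∀ y, G.Adj s y → y ∈ S ∨ y = u)
    (hs : s ∈ S) (hsu : G.Adj s u) (hx : x ∉ S) (hux : G.Reachable u x) :
    G.dist s x = G.dist u x + 1 := by
  refine le_antisymm ?_ ?_
  · obtain ⟨w, hw⟩ := hux.exists_walk_length_eq_dist
    simpa [hw, add_comm] using dist_le (Walk.cons hsu w)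
  · obtain ⟨w, hw⟩ := (hsu.reachable.trans hux).exists_walk_length_eq_dist
    exact hw ▸ w.dist_add_one_le_length_of_separates hS hx hs

theorem Walk.mem_of_forall_adj_mem (hS : ∀ s ∈ S, ∀ y, G.Adj s y → y ∈ S) (w : G.Walk s x)
    (hs : s ∈ S) : x ∈ S := by
  induction w with
  | nil => exact hs
  | cons h _ ih => exact ih (hS _ hs _ h)

def closedNeighborSet (G : SimpleGraph V) (v : V) : Set V := insert v (G.neighborSet v)

@[simp] theorem closedNeighborSet_bot (v : V) : (⊥ : SimpleGraph V).closedNeighborSet v = {v} := by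
  simp [closedNeighborSet]

end SimpleGraph

section wSet

variable {V : Type*} {G : SimpleGraph V} {u v : V}

theorem mem_wSet_of_adj (h : G.Adj u v) : u ∈ wSet G u v := by
  simpa [wSet] using h.reachable.pos_dist_of_ne h.ne

-- Unreachable vertices have junk distance `0` to both ends, so they lie in no `W`-set.
theorem wSet_subset_reachable (u v : V) : wSet G u v ⊆ {x | G.Reachable x v} :=
  fun _ hx => Reachable.of_dist_ne_zero (Nat.ne_zero_of_lt hx)

theorem disjoint_wSet (u v : V) : Disjoint (wSet G u v) (wSet G v u) :=
  Set.disjoint_left.mpr fun _ h₁ h₂ => Nat.lt_asymm h₁ h₂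

theorem ncard_wSet_add_ncard_wSet_le [Finite V] (h : G.Adj u v) :
    (wSet G u v).ncard + (wSet G v u).ncard ≤ {x | G.Reachable x u}.ncard := by
  rw [← ncard_union_eq (disjoint_wSet u v)]
  refine ncard_le_ncard (union_subset ?_ (wSet_subset_reachable v u)) (toFinite _)
  exact (wSet_subset_reachable u v).trans fun _ hx => hx.trans h.symm.reachable

end wSet

namespace QuasiDB

variable {V : Type*} [Finite V] {G : SimpleGraph V} {lam : ℚ} {u v : V}

theorem ncard_wSet_ne (hq : QuasiDB G lam) (hlam : 1 < lam) (h : G.Adj u v) :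
    (wSet G u v).ncard ≠ (wSet G v u).ncard := by
  intro heq
  have hpos : (0 : ℚ) < (wSet G u v).ncard := by
    exact_mod_cast (ncard_pos (toFinite _)).2 ⟨u, mem_wSet_of_adj h⟩
  rcases hq u v h with h' | h' <;> rw [heq] at h' hpos <;> nlinarith

theorem eq_ncard_of_ncard_eq_one (hq : QuasiDB G lam) (hlam : 1 < lam) (h : G.Adj u v)
    (h₁ : (wSet G v u).ncard = 1) : lam = (wSet G u v).ncard := by
  have hpos : (1 : ℚ) ≤ (wSet G u v).ncard := by
    exact_mod_cast (ncard_pos (toFinite _)).2 ⟨u, mem_wSet_of_adj h⟩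
  rcases hq u v h with h' | h' <;> rw [h₁] at h' <;> push_cast at h' <;> nlinarith

theorem add_one_mul_le (hq : QuasiDB G lam) (hlam : 0 ≤ lam) (h : G.Adj u v) {m : ℕ}
    (hu : m ≤ (wSet G u v).ncard) (hv : m ≤ (wSet G v u).ncard) :
    (lam + 1) * m ≤ {x | G.Reachable x u}.ncard := by
  have hsum : ((wSet G u v).ncard : ℚ) + (wSet G v u).ncard ≤ {x | G.Reachable x u}.ncard := by
    exact_mod_cast ncard_wSet_add_ncard_wSet_le h
  have hu' : (m : ℚ) ≤ (wSet G u v).ncard := by exact_mod_cast hu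
  have hv' : (m : ℚ) ≤ (wSet G v u).ncard := by exact_mod_cast hv
  rcases hq u v h with h' | h' <;> nlinarith

end QuasiDB

section Corona

variable {α β : Type*} {G : SimpleGraph α} {H : SimpleGraph β} {a : α} {x : α ⊕ α × β}

@[simp] theorem corona_adj_inl_inl {u v : α} :
    (corona G H).Adj (.inl u) (.inl v) ↔ G.Adj u v := Iff.rfl
@[simp] theorem corona_adj_inl_inr {u : α} {p : α × β} :
    (corona G H).Adj (.inl u) (.inr p) ↔ u = p.1 := Iff.rfl
@[simp] theorem corona_adj_inr_inl {u : α} {p : α × β} :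
    (corona G H).Adj (.inr p) (.inl u) ↔ u = p.1 := Iff.rfl
@[simp] theorem corona_adj_inr_inr {p q : α × β} :
    (corona G H).Adj (.inr p) (.inr q) ↔ p.1 = q.1 ∧ H.Adj p.2 q.2 := Iff.rfl

theorem corona_adj_inr_self (a : α) (b : β) : (corona G H).Adj (.inr (a, b)) (.inl a) := rfl

theorem corona_reachable_inr_iff (b : β) :
    (corona G H).Reachable x (.inr (a, b)) ↔ (corona G H).Reachable x (.inl a) :=
  ⟨fun h => h.trans (corona_adj_inr_self a b).reachable,
    fun h => h.trans (corona_adj_inr_self a b).symm.reachable⟩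

theorem corona_separates (a : α) :
    ∀ s ∈ range (Sum.inr ∘ Prod.mk a : β → α ⊕ α × β), ∀ y, (corona G H).Adj s y →
      y ∈ range (Sum.inr ∘ Prod.mk a) ∨ y = .inl a := by
  rintro _ ⟨b, rfl⟩ (c | ⟨c, b'⟩) h
  · exact Or.inr (by simp_all)
  · exact Or.inl ⟨b', by simp_all⟩

open Classical in
theorem corona_dist_inr_of_notMem (hx : x ∉ range (Sum.inr ∘ Prod.mk a)) (b : β) :
    (corona G H).dist x (.inr (a, b)) =
      if (corona G H).Reachable x (.inl a) then (corona G H).dist x (.inl a) + 1 else 0 := by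
  split_ifs with hr
  · rw [dist_comm, dist_comm (u := x)]
    exact dist_eq_dist_add_one_of_separates (corona_separates a) ⟨b, rfl⟩
      (corona_adj_inr_self a b) hx hr.symm
  · exact dist_eq_zero_of_not_reachable (by rwa [corona_reachable_inr_iff])

theorem corona_dist_inr_inl_self (a : α) (b : β) :
    (corona G H).dist (.inr (a, b)) (.inl a) = 1 :=
  dist_eq_one_iff_adj.2 (corona_adj_inr_self a b)

open Classical in
theorem corona_dist_inr_inr (a : α) (b b' : β) :
    (corona G H).dist (.inr (a, b')) (.inr (a, b)) =
      if b' = b then 0 else if H.Adj b' b then 1 else 2 := by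
  split_ifs with heq hadj
  · rw [heq, dist_self]
  · exact dist_eq_one_iff_adj.2 ⟨rfl, hadj⟩
  · have hle := dist_le (G := corona G H) <|
      (Walk.cons (corona_adj_inr_self a b') (Walk.cons (corona_adj_inr_self a b).symm Walk.nil))
    have hne0 : (corona G H).dist (.inr (a, b')) (.inr (a, b)) ≠ 0 :=
      dist_ne_zero_iff_ne_and_reachable.2
        ⟨by simpa using heq, (corona_reachable_inr_iff b).2 (corona_adj_inr_self a b').reachable⟩
    have hne1 : (corona G H).dist (.inr (a, b')) (.inr (a, b)) ≠ 1 :=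
      fun h => hadj (dist_eq_one_iff_adj.1 h).2
    simp only [Walk.length_cons, Walk.length_nil] at hle
    omega

theorem corona_wSet_inr_inl (a : α) (b : β) :
    wSet (corona G H) (.inr (a, b)) (.inl a) = {.inr (a, b)} := by
  ext x
  by_cases hx : x ∈ range (Sum.inr ∘ Prod.mk a)
  · obtain ⟨b', rfl⟩ := hx
    simp only [wSet, mem_ofPred_eq, mem_singleton_iff, Function.comp_apply,
      corona_dist_inr_inr, corona_dist_inr_inl_self]
    split_ifs <;> simp_all
  · have hne : x ≠ .inr (a, b) := fun h => hx ⟨b, h.symm⟩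
    simp only [wSet, mem_ofPred_eq, mem_singleton_iff, corona_dist_inr_of_notMem hx, hne]
    split_ifs with hr <;> simp [hr]

theorem corona_wSet_inl_inr (a : α) (b : β) :
    wSet (corona G H) (.inl a) (.inr (a, b)) =
      {x | (corona G H).Reachable x (.inl a)} \ (Sum.inr ∘ Prod.mk a) '' H.closedNeighborSet b := by
  ext x
  by_cases hx : x ∈ range (Sum.inr ∘ Prod.mk a)
  · obtain ⟨b', rfl⟩ := hx
    simp only [wSet, mem_ofPred_eq, mem_sdiff, mem_image, Function.comp_apply,
      corona_dist_inr_inr, corona_dist_inr_inl_self, closedNeighborSet, mem_insert_iff,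
      mem_neighborSet]
    have := (corona_adj_inr_self (G := G) (H := H) a b').reachable
    split_ifs <;> simp_all [H.adj_comm]
  · have hx' : x ∉ (Sum.inr ∘ Prod.mk a) '' H.closedNeighborSet b :=
      fun h => hx (image_subset_range _ _ h)
    simp only [wSet, mem_ofPred_eq, mem_sdiff, hx', corona_dist_inr_of_notMem hx, not_false_eq_true,
      and_true]
    split_ifs <;> simpa

theorem corona_wSet_inr_inr {b₁ b₂ : β} (a : α) (hb : H.Adj b₁ b₂) :
    wSet (corona G H) (.inr (a, b₁)) (.inr (a, b₂)) =
      (Sum.inr ∘ Prod.mk a) '' insert b₁ (H.closedNeighborSet b₁ \ H.closedNeighborSet b₂) := by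
  ext x
  by_cases hx : x ∈ range (Sum.inr ∘ Prod.mk a)
  · obtain ⟨b', rfl⟩ := hx
    simp only [wSet, mem_ofPred_eq, Function.comp_apply, corona_dist_inr_inr,
      closedNeighborSet]
    have := hb.ne
    split_ifs <;> simp_all [H.adj_comm]
  · simp only [wSet, mem_ofPred_eq, corona_dist_inr_of_notMem hx, lt_self_iff_false]
    exact iff_of_false id fun h => hx (image_subset_range _ _ h)

theorem insert_inl_range_subset_corona_wSet {a₁ a₂ : α} (h : G.Adj a₁ a₂) :
    insert (.inl a₁) (range (Sum.inr ∘ Prod.mk a₁)) ⊆ wSet (corona G H) (.inl a₁) (.inl a₂) := by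
  have h₂ : (Sum.inl a₂ : α ⊕ α × β) ∉ range (Sum.inr ∘ Prod.mk a₁) := by simp
  rintro _ (rfl | ⟨b, rfl⟩)
  · exact mem_wSet_of_adj h
  · simp only [wSet, mem_ofPred_eq, Function.comp_apply, corona_dist_inr_inl_self]
    rw [dist_comm, corona_dist_inr_of_notMem h₂, if_pos (corona_adj_inl_inl.2 h.symm).reachable]
    simp [dist_eq_one_iff_adj.2 (corona_adj_inl_inl.2 h.symm)]

end Corona

section Counting

variable {α β : Type*} [Finite β] {G : SimpleGraph α} {H : SimpleGraph β}

theorem ncard_insert_inl_range (a : α) :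
    (insert (.inl a) (range (Sum.inr ∘ Prod.mk a : β → α ⊕ α × β))).ncard = Nat.card β + 1 := by
  rw [ncard_insert_of_notMem (by simp),
    ncard_range_of_injective (Sum.inr_injective.comp (Prod.mk_right_injective a))]

theorem corona_ncard_wSet_inl_inr_add [Finite α] (a : α) (b : β) :
    (wSet (corona G H) (.inl a) (.inr (a, b))).ncard + (H.closedNeighborSet b).ncard =
      {x | (corona G H).Reachable x (.inl a)}.ncard := by
  rw [corona_wSet_inl_inr,
    ← ncard_image_of_injective (H.closedNeighborSet b)
      (Sum.inr_injective.comp (Prod.mk_right_injective a))]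
  refine ncard_sdiff_add_ncard_of_subset ?_
  rintro _ ⟨b', -, rfl⟩
  exact (corona_adj_inr_self a b').reachable

theorem corona_ncard_wSet_inr_inr {b₁ b₂ : β} (a : α) (hb : H.Adj b₁ b₂) :
    (wSet (corona G H) (.inr (a, b₁)) (.inr (a, b₂))).ncard =
      (H.closedNeighborSet b₁ \ H.closedNeighborSet b₂).ncard + 1 := by
  have hb₁ : b₁ ∉ H.closedNeighborSet b₁ \ H.closedNeighborSet b₂ :=
    fun h => h.2 (mem_insert_of_mem _ hb.symm)
  rw [corona_wSet_inr_inr a hb,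
    ncard_image_of_injective _ (Sum.inr_injective.comp (Prod.mk_right_injective a)),
    ncard_insert_of_notMem hb₁]

end Counting

theorem corona_bot_setOf_reachable_inl {α β : Type*} {H : SimpleGraph β} (a : α) :
    {x | (corona ⊥ H).Reachable x (.inl a)} = insert (.inl a) (range (Sum.inr ∘ Prod.mk a)) := by
  ext x
  refine ⟨fun ⟨w⟩ => w.reverse.mem_of_forall_adj_mem ?_ (mem_insert _ _), ?_⟩
  · rintro _ (rfl | ⟨b, rfl⟩) (c | ⟨c, b'⟩) h
    · simp at h
    · exact mem_insert_of_mem _ ⟨b', by simp_all⟩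
    · simp_all
    · exact mem_insert_of_mem _ ⟨b', by simp_all⟩
  · rintro (rfl | ⟨b, rfl⟩)
    · exact Reachable.refl _
    · exact (corona_adj_inr_self a b).reachable

namespace QuasiDB

variable {α β : Type*} [Finite α] [Finite β] {G : SimpleGraph α} {H : SimpleGraph β} {lam : ℚ}

theorem corona_lam_add_ncard_closedNeighborSet (hq : QuasiDB (corona G H) lam) (hlam : 1 < lam)
    (a : α) (b : β) :
    lam + (H.closedNeighborSet b).ncard = {x | (corona G H).Reachable x (.inl a)}.ncard := by
  have hW : (wSet (corona G H) (.inr (a, b)) (.inl a)).ncard = 1 := by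
    rw [corona_wSet_inr_inl, ncard_singleton]
  rw [hq.eq_ncard_of_ncard_eq_one hlam (corona_adj_inr_self a b).symm hW]
  exact_mod_cast corona_ncard_wSet_inl_inr_add a b

theorem corona_left_eq_bot [Nonempty β] (hq : QuasiDB (corona G H) lam) (hlam : 1 < lam) :
    G = ⊥ := by
  refine eq_bot_iff_forall_not_adj.2 fun a₁ a₂ h => ?_
  obtain ⟨b⟩ := ‹Nonempty β›
  have hstar := hq.corona_lam_add_ncard_closedNeighborSet hlam a₁ b
  have hnbhd : (H.closedNeighborSet b).ncard ≤ Nat.card β := ncard_le_card _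
  have hW₁₂ : Nat.card β + 1 ≤ (wSet (corona G H) (.inl a₁) (.inl a₂)).ncard :=
    (ncard_insert_inl_range a₁).symm.le.trans
      (ncard_le_ncard (insert_inl_range_subset_corona_wSet h))
  have hW₂₁ : Nat.card β + 1 ≤ (wSet (corona G H) (.inl a₂) (.inl a₁)).ncard :=
    (ncard_insert_inl_range a₂).symm.le.trans
      (ncard_le_ncard (insert_inl_range_subset_corona_wSet h.symm))
  have hedge := hq.add_one_mul_le (by linarith) (corona_adj_inl_inl.2 h) hW₁₂ hW₂₁
  rw [← hstar] at hedge
  -- `(λ + 1)(|β| + 1) ≤ λ + |N[b]| ≤ λ + |β|` is impossible for `λ > 0`.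
  have hnbhd' : ((H.closedNeighborSet b).ncard : ℚ) ≤ Nat.card β := by exact_mod_cast hnbhd
  push_cast at hedge
  nlinarith

theorem corona_right_eq_bot [Nonempty α] (hq : QuasiDB (corona G H) lam) (hlam : 1 < lam) :
    H = ⊥ := by
  refine eq_bot_iff_forall_not_adj.2 fun b₁ b₂ hb => ?_
  obtain ⟨a⟩ := ‹Nonempty α›
  have hcard : (H.closedNeighborSet b₁).ncard = (H.closedNeighborSet b₂).ncard := by
    have h₁ := hq.corona_lam_add_ncard_closedNeighborSet hlam a b₁
    have h₂ := hq.corona_lam_add_ncard_closedNeighborSet hlam a b₂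
    exact_mod_cast (by linarith :
      ((H.closedNeighborSet b₁).ncard : ℚ) = (H.closedNeighborSet b₂).ncard)
  apply hq.ncard_wSet_ne hlam (show (corona G H).Adj (.inr (a, b₁)) (.inr (a, b₂)) from ⟨rfl, hb⟩)
  rw [corona_ncard_wSet_inr_inr a hb, corona_ncard_wSet_inr_inr a hb.symm,
    (ncard_eq_ncard_iff_ncard_sdiff_eq_ncard_sdiff (toFinite _) (toFinite _)).1 hcard]

end QuasiDB

theorem quasiDB_corona_bot_bot {α β : Type*} [Finite α] [Finite β] :
    QuasiDB (corona (⊥ : SimpleGraph α) (⊥ : SimpleGraph β)) (Nat.card β) := by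
  have hstar (a : α) (b : β) :
      (wSet (corona (⊥ : SimpleGraph α) (⊥ : SimpleGraph β)) (.inl a) (.inr (a, b))).ncard =
        Nat.card β := by
    have h := corona_ncard_wSet_inl_inr_add (G := ⊥) (H := ⊥) a b
    rwa [corona_bot_setOf_reachable_inl, ncard_insert_inl_range, closedNeighborSet_bot,
      ncard_singleton, Nat.add_right_cancel_iff] at h
  rintro (a | ⟨a, b⟩) (a' | ⟨a', b'⟩) h
  · simp at h
  · obtain rfl : a = a' := h
    left
    rw [hstar, corona_wSet_inr_inl, ncard_singleton, Nat.cast_one, mul_one]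
  · obtain rfl : a' = a := h
    right
    rw [hstar, corona_wSet_inr_inl, ncard_singleton, Nat.cast_one, mul_one]
  · simp at h

/-- The corona product of two nontrivial graphs is quasi-`lam`-distance-balanced
iff both graphs are empty, in which case `lam = |V(H)|`. -/
theorem stmt9 {α β : Type*} [Fintype α] [Fintype β] [Nontrivial α] [Nontrivial β]
    (G : SimpleGraph α) (H : SimpleGraph β) (lam : ℚ) :
    (1 < lam ∧ QuasiDB (corona G H) lam) ↔
      (G = ⊥ ∧ H = ⊥ ∧ lam = (Fintype.card β : ℚ)) := by
  rw [← Nat.card_eq_fintype_card]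
  constructor
  · rintro ⟨hlam, hq⟩
    obtain rfl := hq.corona_left_eq_bot hlam
    obtain rfl := hq.corona_right_eq_bot hlam
    obtain ⟨a⟩ : Nonempty α := inferInstance
    obtain ⟨b⟩ : Nonempty β := inferInstance
    have h := hq.corona_lam_add_ncard_closedNeighborSet hlam a b
    rw [corona_bot_setOf_reachable_inl, ncard_insert_inl_range, closedNeighborSet_bot,
      ncard_singleton] at h
    exact ⟨rfl, rfl, by push_cast at h; linarith⟩
  · rintro ⟨rfl, rfl, rfl⟩
    exact ⟨by exact_mod_cast Finite.one_lt_card, quasiDB_corona_bot_bot⟩
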